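/- arXiv:2006.15856 — 3 statements merged into one kernel-verified Lean document; each statement's English description precedes it below -/
import Mathlib

section
/- The Dirichlet series of Klee's totient φ_b equals ζ(s−1)/ζ(bs) for Re(s) > 2: Σ_{n≥1} φ_b(n)/n^s = ζ(s−1)/ζ(bs). -/
noncomputable def ggcd (b r s : ℕ) : ℕ := sSup {d : ℕ | 0 < d ∧ d ^ b ∣ r ∧ d ^ b ∣ s}

noncomputable def klee (b n : ℕ) : ℕ :=
  ((Finset.Icc 1 n).filter (fun k => ggcd b k n = 1)).card

/-!
Expanding the indicator of `ggcd b k n = 1` by Möbius inversion over the divisors of `ggcd b k n`,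
which are the `d` with `d ^ b ∣ k` and `d ^ b ∣ n`, and counting the `k ≤ n` divisible by `d ^ b`
gives `φ_b(n) = ∑_{d ^ b ∣ n} μ(d) n / d ^ b`. So `φ_b` is the Dirichlet convolution of `n ↦ n`
with `extend (· ^ b) μ 0` (`d ^ b ↦ μ(d)`, zero off `b`-th powers), whose L-series at `s` is
`L(μ, b s) = 1 / ζ(b s)`, while that of `n ↦ n` is `ζ(s - 1)`.
-/

open ArithmeticFunction Finset Function LSeries
open scoped LSeries.notation ArithmeticFunction.Moebius

-- `lcm d G ^ b = lcm (d ^ b) (G ^ b)` divides `m`, so maximality of `G := sSup _` forces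
-- `lcm d G = G`.
lemma Nat.dvd_sSup_pow_dvd_iff {b m : ℕ} (hb : b ≠ 0) (hm : m ≠ 0) (d : ℕ) :
    d ∣ sSup {e | 0 < e ∧ e ^ b ∣ m} ↔ d ^ b ∣ m := by
  set S := {e | 0 < e ∧ e ^ b ∣ m}
  have hbdd : BddAbove S := ⟨m, fun e he ↦
    (Nat.le_self_pow hb e).trans (Nat.le_of_dvd (Nat.pos_of_ne_zero hm) he.2)⟩
  have hmem : sSup S ∈ S := Nat.sSup_mem ⟨1, one_pos, by simp⟩ hbdd
  refine ⟨fun h ↦ (pow_dvd_pow_of_dvd h b).trans hmem.2, fun hd ↦ ?_⟩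
  have hd0 : 0 < d := Nat.pos_of_ne_zero fun h ↦ hm (by simpa [h, hb] using hd)
  have hlcm : d.lcm (sSup S) ∈ S :=
    ⟨Nat.lcm_pos hd0 hmem.1, Nat.pow_lcm_pow ▸ Nat.lcm_dvd hd hmem.2⟩
  have hlcm_eq : d.lcm (sSup S) = sSup S :=
    le_antisymm (le_csSup hbdd hlcm) (Nat.le_of_dvd hlcm.1 (Nat.dvd_lcm_right _ _))
  exact hlcm_eq ▸ Nat.dvd_lcm_left _ _

lemma dvd_ggcd_iff {b k : ℕ} (hb : b ≠ 0) (hk : k ≠ 0) (n d : ℕ) :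
    d ∣ ggcd b k n ↔ d ^ b ∣ k ∧ d ^ b ∣ n := by
  simp_rw [ggcd, ← Nat.dvd_gcd_iff]
  exact Nat.dvd_sSup_pow_dvd_iff hb (Nat.gcd_ne_zero_left hk) d

lemma divisors_ggcd {b k n : ℕ} (hb : b ≠ 0) (hk : k ≠ 0) (hn : n ≠ 0) :
    (ggcd b k n).divisors = n.divisors.filter (fun d ↦ d ^ b ∣ k ∧ d ^ b ∣ n) := by
  have hg : ggcd b k n ≠ 0 := fun h ↦ by
    simpa [hb, hk] using (dvd_ggcd_iff hb hk n 0).1 (h ▸ dvd_rfl)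
  ext d
  simp only [Nat.mem_divisors, mem_filter, dvd_ggcd_iff hb hk, hg, hn, ne_eq, not_false_eq_true,
    and_true]
  exact ⟨fun h ↦ ⟨(dvd_pow_self d hb).trans h.2, h⟩, And.right⟩

lemma sum_divisors_moebius {R : Type*} [Ring R] (n : ℕ) :
    ∑ d ∈ n.divisors, (μ d : R) = if n = 1 then 1 else 0 := by
  have h := congrArg (· n) (coe_moebius_mul_coe_zeta (R := R))
  simp only [coe_mul_zeta_apply, one_apply] at h
  exact h

lemma klee_eq_sum_moebius {R : Type*} [Ring R] {b : ℕ} (hb : b ≠ 0) (n : ℕ) :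
    (klee b n : R) = ∑ d ∈ n.divisors.filter (fun d ↦ d ^ b ∣ n), (μ d : R) * (n / d ^ b : ℕ) := by
  have hindicator : ∀ k ∈ Icc 1 n, (if ggcd b k n = 1 then 1 else 0 : R) =
      ∑ d ∈ n.divisors, if d ^ b ∣ k ∧ d ^ b ∣ n then (μ d : R) else 0 := by
    intro k hk
    have hk0 : k ≠ 0 := by have := (mem_Icc.1 hk).1; omega
    have hn0 : n ≠ 0 := by have := (mem_Icc.1 hk).2; omega
    rw [← sum_filter, ← divisors_ggcd hb hk0 hn0, sum_divisors_moebius]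
  have hcount : ∀ d : ℕ, (∑ k ∈ Icc 1 n, if d ^ b ∣ k ∧ d ^ b ∣ n then (μ d : R) else 0) =
      if d ^ b ∣ n then (μ d : R) * (n / d ^ b : ℕ) else 0 := by
    intro d
    by_cases hdn : d ^ b ∣ n
    · rw [if_pos hdn, ← sum_filter, sum_const, show Icc 1 n = Ioc 0 n from rfl]
      simp [hdn, Nat.Ioc_filter_dvd_card_eq_div, Nat.cast_comm]
    · simp [hdn]
  rw [klee, natCast_card_filter, sum_congr rfl hindicator, sum_comm, sum_filter]
  exact sum_congr rfl fun d _ ↦ hcount d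

lemma klee_eq_convolution {b : ℕ} (hb : b ≠ 0) :
    (fun n ↦ (klee b n : ℂ)) = extend (· ^ b) ↗μ 0 ⍟ (fun n ↦ (n : ℂ)) := by
  have hinj := Nat.pow_left_injective hb
  ext n
  have hpreimage : n.divisors.preimage (· ^ b) hinj.injOn = n.divisors.filter (· ^ b ∣ n) := by
    ext d
    simp only [mem_preimage, Nat.mem_divisors, mem_filter]
    exact ⟨fun h ↦ ⟨⟨(dvd_pow_self d hb).trans h.1, h.2⟩, h.1⟩, fun h ↦ ⟨h.2, h.1.2⟩⟩
  simp only [convolution_def]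
  rw [Nat.sum_divisorsAntidiagonal (fun a m ↦ extend (· ^ b) ↗μ 0 a * (m : ℂ)),
    ← sum_preimage (· ^ b) _ hinj.injOn _ fun a _ ha ↦ by rw [extend_apply' _ _ _ ha]; simp,
    hpreimage, klee_eq_sum_moebius hb]
  exact sum_congr rfl fun d _ ↦ by rw [hinj.extend_apply]

lemma term_extend_pow {b : ℕ} (hb : b ≠ 0) (f : ℕ → ℂ) (s : ℂ) :
    term (extend (· ^ b) f 0) s = extend (· ^ b) (term f (b * s)) 0 := by
  have hinj := Nat.pow_left_injective hb
  ext a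
  by_cases ha : ∃ e, e ^ b = a
  · obtain ⟨e, rfl⟩ := ha
    rw [hinj.extend_apply]
    rcases eq_or_ne e 0 with rfl | he
    · simp [hb, term_zero]
    · rw [term_of_ne_zero (pow_ne_zero b he), term_of_ne_zero he, hinj.extend_apply]
      push_cast
      rw [← Complex.natCast_cpow_natCast_mul]
  · simp [term_def, extend_apply' _ _ _ ha]

lemma LSeries_extend_pow {b : ℕ} (hb : b ≠ 0) (f : ℕ → ℂ) (s : ℂ) :
    L (extend (· ^ b) f 0) s = L f (b * s) := by
  rw [LSeries, term_extend_pow hb, tsum_extend_zero (Nat.pow_left_injective hb), LSeries]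

lemma LSeriesSummable_extend_pow_iff {b : ℕ} (hb : b ≠ 0) {f : ℕ → ℂ} {s : ℂ} :
    LSeriesSummable (extend (· ^ b) f 0) s ↔ LSeriesSummable f (b * s) := by
  rw [LSeriesSummable, term_extend_pow hb, summable_extend_zero (Nat.pow_left_injective hb),
    LSeriesSummable]

lemma LSeries_moebius_eq_inv_riemannZeta {s : ℂ} (hs : 1 < s.re) : L ↗μ s = (riemannZeta s)⁻¹ :=
  eq_inv_of_mul_eq_one_right (LSeries_zeta_eq_riemannZeta hs ▸ LSeries_zeta_mul_Lseries_moebius hs)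

lemma term_natCast (s : ℂ) : term (fun n ↦ (n : ℂ)) s = term 1 (s - 1) := by
  ext n
  rcases eq_or_ne n 0 with rfl | hn
  · simp only [term_zero]
  · have hn' : (n : ℂ) ≠ 0 := Nat.cast_ne_zero.2 hn
    rw [term_of_ne_zero hn, term_of_ne_zero hn, Pi.one_apply, Complex.cpow_sub _ _ hn',
      Complex.cpow_one, one_div_div]

lemma LSeriesSummable_natCast {s : ℂ} (hs : 2 < s.re) : LSeriesSummable (fun n ↦ (n : ℂ)) s := by
  rw [LSeriesSummable, term_natCast]
  exact LSeriesSummable_one_iff.2 (by rw [Complex.sub_re, Complex.one_re]; linarith)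

lemma LSeries_natCast {s : ℂ} (hs : 2 < s.re) : L (fun n ↦ (n : ℂ)) s = riemannZeta (s - 1) := by
  rw [LSeries, term_natCast, ← LSeries, LSeries_one_eq_riemannZeta (by rw [Complex.sub_re, Complex.one_re]; linarith)]

theorem klee_dirichlet_series (b : ℕ) (hb : 1 ≤ b) (s : ℂ) (hs : 2 < s.re) :
    ∑' n : ℕ+, (klee b n : ℂ) / (n : ℂ) ^ s =
      riemannZeta (s - 1) / riemannZeta ((b : ℂ) * s) := by
  have hb0 : b ≠ 0 := by omega
  have hbs : 1 < ((b : ℂ) * s).re := by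
    have : (1 : ℝ) ≤ b := by exact_mod_cast hb
    simp only [Complex.mul_re, Complex.natCast_re, Complex.natCast_im, zero_mul, sub_zero]
    nlinarith
  have hμ : LSeriesSummable (extend (· ^ b) ↗μ 0) s :=
    (LSeriesSummable_extend_pow_iff hb0).2 (LSeriesSummable_moebius_iff.2 hbs)
  calc ∑' n : ℕ+, (klee b n : ℂ) / (n : ℂ) ^ s = L (fun n ↦ (klee b n : ℂ)) s := by
        rw [LSeries, ← tsum_pnat_eq_tsum_of_eq_zero (term_zero _ _)]
        exact tsum_congr fun n ↦ (term_of_ne_zero n.ne_zero (fun n ↦ (klee b n : ℂ)) s).symm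
    _ = L (extend (· ^ b) ↗μ 0) s * L (fun n ↦ (n : ℂ)) s := by
        rw [klee_eq_convolution hb0, LSeries_convolution' hμ (LSeriesSummable_natCast hs)]
    _ = riemannZeta (s - 1) / riemannZeta ((b : ℂ) * s) := by
        rw [LSeries_extend_pow hb0, LSeries_moebius_eq_inv_riemannZeta hbs, LSeries_natCast hs,
          inv_mul_eq_div]
end

section
/- The harmonic mean reciprocal satisfies the identity n/H_b(n) = Σ_{d^b | n} (1/d) · φ_b(n/d^b), where H_b(n) := n · (Σ_{j=1}^n 1/(j,n)_b)^{−1}. -/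
lemma ggcd_mem (b r s : ℕ) (hb : 1 ≤ b) (hs : 0 < s) :
    0 < ggcd b r s ∧ (ggcd b r s) ^ b ∣ r ∧ (ggcd b r s) ^ b ∣ s := by
  have h : ggcd b r s ∈ {d : ℕ | 0 < d ∧ d ^ b ∣ r ∧ d ^ b ∣ s} := by
    apply Nat.sSup_mem ⟨1, by simp⟩
    refine ⟨s, fun d hd => ?_⟩
    calc d ≤ d ^ b := Nat.le_self_pow (by omega) d
      _ ≤ s := Nat.le_of_dvd hs hd.2.2
  exact h

lemma le_ggcd (b r s e : ℕ) (hb : 1 ≤ b) (hs : 0 < s) (he : 0 < e)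
    (h1 : e ^ b ∣ r) (h2 : e ^ b ∣ s) : e ≤ ggcd b r s := by
  apply le_csSup
  · refine ⟨s, fun d hd => ?_⟩
    calc d ≤ d ^ b := Nat.le_self_pow (by omega) d
      _ ≤ s := Nat.le_of_dvd hs hd.2.2
  · exact ⟨he, h1, h2⟩

lemma ggcd_div_eq_one (b j n : ℕ) (hb : 1 ≤ b) (hj : 0 < j) (hn : 0 < n) :
    ggcd b (j / (ggcd b j n) ^ b) (n / (ggcd b j n) ^ b) = 1 := by
  obtain ⟨hd, hdj, hdn⟩ := ggcd_mem b j n hb hn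
  set d := ggcd b j n with hdef
  have hdbpos : 0 < d ^ b := pow_pos hd b
  have hn' : 0 < n / d ^ b := Nat.div_pos (Nat.le_of_dvd hn hdn) hdbpos
  obtain ⟨hD, hDj, hDn⟩ := ggcd_mem b (j / d ^ b) (n / d ^ b) hb hn'
  set D := ggcd b (j / d ^ b) (n / d ^ b) with hDdef
  have h1 : (d * D) ^ b ∣ j := by
    rw [mul_pow]
    obtain ⟨c, hc⟩ := hDj
    exact ⟨c, by rw [← Nat.div_mul_cancel hdj, hc]; ring⟩
  have h2 : (d * D) ^ b ∣ n := by
    rw [mul_pow]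
    obtain ⟨c, hc⟩ := hDn
    exact ⟨c, by rw [← Nat.div_mul_cancel hdn, hc]; ring⟩
  have hle : d * D ≤ d := le_ggcd b j n (d * D) hb hn (Nat.mul_pos hd hD) h1 h2
  have : D ≤ 1 := by
    by_contra hcon
    push_neg at hcon
    nlinarith
  omega

lemma ggcd_mul_pow (b d k m : ℕ) (hb : 1 ≤ b) (hd : 0 < d) (hk : 0 < k) (hm : 0 < m)
    (h1 : ggcd b k m = 1) : ggcd b (d ^ b * k) (d ^ b * m) = d := by
  have hdb : 0 < d ^ b := pow_pos hd b
  apply le_antisymm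
  · obtain ⟨he, he1, he2⟩ := ggcd_mem b (d ^ b * k) (d ^ b * m) hb (Nat.mul_pos hdb hm)
    set e := ggcd b (d ^ b * k) (d ^ b * m) with hedef
    have hdvd : e ∣ d := by
      rw [← Nat.factorization_le_iff_dvd he.ne' hd.ne']
      intro p
      by_contra hp
      push_neg at hp
      have hpp : p.Prime := by
        by_contra hnp
        rw [Nat.factorization_eq_zero_of_not_prime e hnp] at hp; omega
      have hf1 : (e ^ b).factorization ≤ (d ^ b * k).factorization :=
        (Nat.factorization_le_iff_dvd (pow_pos he b).ne' (Nat.mul_pos hdb hk).ne').mpr he1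
      have hf2 : (e ^ b).factorization ≤ (d ^ b * m).factorization :=
        (Nat.factorization_le_iff_dvd (pow_pos he b).ne' (Nat.mul_pos hdb hm).ne').mpr he2
      have e1 := hf1 p
      have e2 := hf2 p
      rw [Nat.factorization_pow, Nat.factorization_mul hdb.ne' hk.ne',
        Nat.factorization_pow] at e1
      rw [Nat.factorization_pow, Nat.factorization_mul hdb.ne' hm.ne',
        Nat.factorization_pow] at e2
      simp only [Finsupp.smul_apply, Finsupp.coe_add, Pi.add_apply, smul_eq_mul] at e1 e2
      have hlt : d.factorization p + 1 ≤ e.factorization p := by omega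
      have hbk : b ≤ k.factorization p := by nlinarith
      have hbm : b ≤ m.factorization p := by nlinarith
      have hpk : p ^ b ∣ k := (Nat.Prime.pow_dvd_iff_le_factorization hpp hk.ne').mpr hbk
      have hpm : p ^ b ∣ m := (Nat.Prime.pow_dvd_iff_le_factorization hpp hm.ne').mpr hbm
      have hple := le_ggcd b k m p hb hm hpp.pos hpk hpm
      rw [h1] at hple
      have := hpp.two_le
      omega
    exact Nat.le_of_dvd hd hdvd
  · exact le_ggcd b (d ^ b * k) (d ^ b * m) d hb (Nat.mul_pos hdb hm) hd ⟨k, rfl⟩ ⟨m, rfl⟩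

theorem harmonic_mean_identity (b n : ℕ) (hb : 2 ≤ b) (hn : 1 ≤ n) :
    ∑ j ∈ Finset.Icc 1 n, (1 : ℚ) / (ggcd b j n : ℚ) =
      ∑ d ∈ (Finset.Icc 1 n).filter (fun d => d ^ b ∣ n),
        (klee b (n / d ^ b) : ℚ) / (d : ℚ) := by
  classical
  have hb1 : 1 ≤ b := by omega
  have hn0 : 0 < n := hn
  have hmaps : ∀ j ∈ Finset.Icc 1 n,
      ggcd b j n ∈ (Finset.Icc 1 n).filter (fun d => d ^ b ∣ n) := by
    intro j hj
    obtain ⟨hd, _, hdn⟩ := ggcd_mem b j n hb1 hn0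
    simp only [Finset.mem_filter, Finset.mem_Icc]
    refine ⟨⟨hd, ?_⟩, hdn⟩
    calc ggcd b j n ≤ (ggcd b j n) ^ b := Nat.le_self_pow (by omega) _
      _ ≤ n := Nat.le_of_dvd hn0 hdn
  rw [← Finset.sum_fiberwise_of_maps_to hmaps (fun j => (1 : ℚ) / (ggcd b j n : ℚ))]
  apply Finset.sum_congr rfl
  intro d hdmem
  simp only [Finset.mem_filter, Finset.mem_Icc] at hdmem
  obtain ⟨⟨hd1, hdn'⟩, hdvd⟩ := hdmem
  have hd0 : 0 < d := hd1
  have hdb : 0 < d ^ b := pow_pos hd0 b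
  have hmn : 0 < n / d ^ b := Nat.div_pos (Nat.le_of_dvd hn0 hdvd) hdb
  have hcard : ((Finset.Icc 1 n).filter (fun j => ggcd b j n = d)).card
      = klee b (n / d ^ b) := by
    unfold klee
    apply Finset.card_bij (fun j _ => j / d ^ b)
    · intro j hj
      simp only [Finset.mem_filter, Finset.mem_Icc] at hj ⊢
      obtain ⟨⟨hj1, hjn⟩, hgj⟩ := hj
      have hpos : 0 < j := hj1
      obtain ⟨_, hdj, _⟩ := ggcd_mem b j n hb1 hn0
      rw [hgj] at hdj
      refine ⟨⟨(Nat.one_le_div_iff hdb).mpr (Nat.le_of_dvd hpos hdj),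
        Nat.div_le_div_right hjn⟩, ?_⟩
      have h := ggcd_div_eq_one b j n hb1 hpos hn0
      rwa [hgj] at h
    · intro j1 hj1 j2 hj2 heq
      simp only [Finset.mem_filter, Finset.mem_Icc] at hj1 hj2
      obtain ⟨⟨hj11, _⟩, hg1⟩ := hj1
      obtain ⟨⟨hj21, _⟩, hg2⟩ := hj2
      obtain ⟨_, hdj1, _⟩ := ggcd_mem b j1 n hb1 hn0
      obtain ⟨_, hdj2, _⟩ := ggcd_mem b j2 n hb1 hn0
      rw [hg1] at hdj1
      rw [hg2] at hdj2
      calc j1 = d ^ b * (j1 / d ^ b) := (Nat.mul_div_cancel' hdj1).symm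
        _ = d ^ b * (j2 / d ^ b) := by rw [heq]
        _ = j2 := Nat.mul_div_cancel' hdj2
    · intro k hk
      simp only [Finset.mem_filter, Finset.mem_Icc] at hk
      obtain ⟨⟨hk1, hkn⟩, hgk⟩ := hk
      refine ⟨d ^ b * k, ?_, ?_⟩
      · simp only [Finset.mem_filter, Finset.mem_Icc]
        have hle : d ^ b * k ≤ n := by
          rw [mul_comm]
          exact (Nat.le_div_iff_mul_le hdb).mp hkn
        refine ⟨⟨Nat.one_le_iff_ne_zero.mpr (Nat.mul_pos hdb hk1).ne', hle⟩, ?_⟩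
        have hne : n = d ^ b * (n / d ^ b) := (Nat.mul_div_cancel' hdvd).symm
        rw [hne]
        exact ggcd_mul_pow b d k (n / d ^ b) hb1 hd0 hk1 hmn hgk
      · rw [Nat.mul_div_cancel_left k hdb]
  calc ∑ j ∈ (Finset.Icc 1 n).filter (fun j => ggcd b j n = d), (1 : ℚ) / (ggcd b j n : ℚ)
      = ∑ j ∈ (Finset.Icc 1 n).filter (fun j => ggcd b j n = d), (1 : ℚ) / (d : ℚ) := by
        apply Finset.sum_congr rfl
        intro j hj
        simp only [Finset.mem_filter] at hj
        rw [hj.2]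
    _ = ((Finset.Icc 1 n).filter (fun j => ggcd b j n = d)).card • ((1 : ℚ) / d) :=
        Finset.sum_const _
    _ = (klee b (n / d ^ b) : ℚ) / (d : ℚ) := by
        rw [hcard, nsmul_eq_mul, mul_one_div]
end

section
/- For b ≥ 2 and k ≥ 2 (with bk > 2 guaranteed), Σ_{n_1,…,n_k ≤ x} (n_1,…,n_k)_b = (ζ(bk−1)/ζ(bk)) x^k + O(x^{k−1}) as x → ∞, where (n_1,…,n_k)_b := max{d ≥ 1 : d^b | n_i for all i}, provided (b,k) ≠ (2,2); for b = 2, k = 2 the error term is O(x log x). -/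
/-!
Since `(n)_b = ∑_{d ∣ (n)_b} φ(d)` and `d ∣ (n)_b ↔ ∀ i, d ^ b ∣ n_i`, the sum over the box
`[1, x]^k` equals `∑_d φ(d) ⌊x / d^b⌋^k`. Replacing `⌊y⌋^k` by `y^k` costs at most `k y^(k-1)`
per term, hence `k x^(k-1) ∑_d φ(d) / d^(b(k-1))` in total, a convergent series as
`b(k-1) ≥ 3`; and `∑_d φ(d) / d^s = ζ(s-1) / ζ(s)` because `φ ⋆ 1 = id`.
-/

noncomputable def ggcdk (b k : ℕ) (n : Fin k → ℕ) : ℕ :=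
  sSup {d : ℕ | 0 < d ∧ ∀ i, d ^ b ∣ n i}

open Finset LSeries
open scoped Nat LSeries.notation

lemma dvd_ggcdk_iff {b k d : ℕ} {n : Fin k → ℕ} : d ∣ ggcdk b k n ↔ ∀ i, d ^ b ∣ n i := by
  set S := {e : ℕ | 0 < e ∧ ∀ i, e ^ b ∣ n i}
  have hbdd : (∃ i, ¬ d ^ b ∣ n i) → BddAbove S := by
    rintro ⟨i, hi⟩
    have hb : b ≠ 0 := by rintro rfl; simp at hi
    have hni : 0 < n i := Nat.pos_of_ne_zero fun h => hi (h ▸ dvd_zero _)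
    exact ⟨n i, fun e he => (Nat.le_self_pow hb e).trans (Nat.le_of_dvd hni (he.2 i))⟩
  by_cases hS : BddAbove S
  · have hmem : sSup S ∈ S := Nat.sSup_mem ⟨1, one_pos, fun _ => by simp⟩ hS
    change d ∣ sSup S ↔ _
    refine ⟨fun hd i => (pow_dvd_pow_of_dvd hd b).trans (hmem.2 i), fun hd => ?_⟩
    rcases Nat.eq_zero_or_pos d with rfl | hd0
    · -- `e ^ b ∣ 0 ^ b` for every `e`, so `S` would contain every positive integer
      have : sSup S + 1 ∈ S :=
        ⟨Nat.succ_pos _, fun i => (pow_dvd_pow_of_dvd (dvd_zero _) b).trans (hd i)⟩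
      exact absurd (le_csSup hS this) (by omega)
    · have hlcm : Nat.lcm d (sSup S) ∈ S :=
        ⟨Nat.lcm_pos hd0 hmem.1, fun i => Nat.pow_lcm_pow ▸ Nat.lcm_dvd (hd i) (hmem.2 i)⟩
      have hlcm_eq : Nat.lcm d (sSup S) = sSup S :=
        le_antisymm (le_csSup hS hlcm) (Nat.le_of_dvd hlcm.1 (Nat.dvd_lcm_right _ _))
      exact hlcm_eq ▸ Nat.dvd_lcm_left _ _
  · rw [show ggcdk b k n = 0 from Nat.sSup_of_not_bddAbove hS]
    exact ⟨fun _ => by by_contra! h; exact hS (hbdd h), fun _ => dvd_zero d⟩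

lemma ggcdk_eq_sum_totient {b k N : ℕ} (hb : b ≠ 0) (hk : k ≠ 0) {n : Fin k → ℕ}
    (hn : ∀ i, n i ∈ Icc 1 N) :
    ggcdk b k n = ∑ d ∈ range (N + 1) with ∀ i, d ^ b ∣ n i, φ d := by
  have i₀ : Fin k := ⟨0, Nat.pos_of_ne_zero hk⟩
  have hn₀ : 0 < n i₀ := (mem_Icc.1 (hn i₀)).1
  have hD : ggcdk b k n ≠ 0 := fun h => by
    have := dvd_ggcdk_iff.1 (show 0 ∣ ggcdk b k n by rw [h]) i₀
    rw [zero_pow hb, zero_dvd_iff] at this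
    omega
  rw [← Nat.sum_totient (ggcdk b k n)]
  congr 1
  ext d
  simp only [mem_filter, mem_range, Nat.mem_divisors, dvd_ggcdk_iff, and_iff_left hD]
  refine ⟨fun hd => ⟨?_, hd⟩, And.right⟩
  calc d ≤ d ^ b := Nat.le_self_pow hb d
    _ ≤ n i₀ := Nat.le_of_dvd hn₀ (hd i₀)
    _ < N + 1 := Nat.lt_succ_of_le (mem_Icc.1 (hn i₀)).2

lemma sum_ggcdk_eq_sum_totient_mul {b k N : ℕ} (hb : b ≠ 0) (hk : k ≠ 0) :
    ∑ n ∈ Fintype.piFinset (fun _ : Fin k => Icc 1 N), ggcdk b k n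
      = ∑ d ∈ range (N + 1), φ d * (N / d ^ b) ^ k := by
  rw [sum_congr rfl fun n hn => ggcdk_eq_sum_totient hb hk (Fintype.mem_piFinset.1 hn)]
  simp_rw [sum_filter]
  rw [sum_comm]
  refine sum_congr rfl fun d _ => ?_
  have hfilter : {n ∈ Fintype.piFinset (fun _ : Fin k => Icc 1 N) | ∀ i, d ^ b ∣ n i}
      = Fintype.piFinset (fun _ : Fin k => {m ∈ Ioc 0 N | d ^ b ∣ m}) := by
    ext n
    simp [forall_and, ← Finset.Icc_add_one_left_eq_Ioc]
  rw [← sum_filter, sum_const, smul_eq_mul, mul_comm, hfilter, Fintype.card_piFinset_const,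
    Nat.Ioc_filter_dvd_card_eq_div]

lemma sum_ggcdk_eq_tsum {b k : ℕ} (hb : b ≠ 0) (hk : k ≠ 0) (x : ℝ) :
    ∑ n ∈ Fintype.piFinset (fun _ : Fin k => Icc 1 ⌊x⌋₊), (ggcdk b k n : ℝ)
      = ∑' d : ℕ, (φ d : ℝ) * (⌊x / d ^ b⌋₊ : ℝ) ^ k := by
  have hfloor (d : ℕ) : ⌊x / d ^ b⌋₊ = ⌊x⌋₊ / d ^ b := by
    exact_mod_cast Nat.floor_div_natCast x (d ^ b)
  rw [← Nat.cast_sum, sum_ggcdk_eq_sum_totient_mul hb hk, tsum_eq_sum (s := range (⌊x⌋₊ + 1))]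
  · push_cast [hfloor]
    rfl
  · intro d hd
    rw [mem_range, not_lt] at hd
    rw [hfloor, Nat.div_eq_of_lt ((Nat.lt_of_succ_le hd).trans_le (Nat.le_self_pow hb d))]
    simp [hk]

lemma abs_floor_pow_sub_pow_le {y : ℝ} (hy : 0 ≤ y) (k : ℕ) :
    |(⌊y⌋₊ : ℝ) ^ k - y ^ k| ≤ k * y ^ (k - 1) := by
  have hle : (⌊y⌋₊ : ℝ) ≤ y := Nat.floor_le hy
  have hsub : |(⌊y⌋₊ : ℝ) - y| ≤ 1 := by
    rw [abs_sub_comm, abs_of_nonneg (sub_nonneg.2 hle)]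
    linarith [Nat.lt_floor_add_one y]
  calc |(⌊y⌋₊ : ℝ) ^ k - y ^ k| ≤ |(⌊y⌋₊ : ℝ) - y| * k * max |(⌊y⌋₊ : ℝ)| |y| ^ (k - 1) :=
        abs_pow_sub_pow_le ..
    _ ≤ 1 * k * y ^ (k - 1) := by
        rw [abs_of_nonneg hy, Nat.abs_cast, max_eq_right hle]
        gcongr
    _ = k * y ^ (k - 1) := by rw [one_mul]

lemma summable_totient_div_pow {m : ℕ} (hm : 2 < m) :
    Summable fun d : ℕ => (φ d : ℝ) / d ^ m := by
  refine Summable.of_nonneg_of_le (fun d => by positivity) (fun d => ?_)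
    (Real.summable_one_div_nat_pow.2 (by omega : 1 < m - 1))
  rcases Nat.eq_zero_or_pos d with rfl | hd
  · simp
  · have hpow : (d : ℝ) ^ m = d ^ (m - 1) * d := by rw [← pow_succ]; congr 1; omega
    rw [hpow, div_le_div_iff₀ (by positivity) (by positivity)]
    have : (φ d : ℝ) ≤ d := by exact_mod_cast Nat.totient_le d
    nlinarith [pow_pos (show (0 : ℝ) < d by exact_mod_cast hd) (m - 1)]

lemma abs_tsum_totient_mul_floor_pow_sub_le {b k : ℕ} (hbk : 2 < b * (k - 1)) {x : ℝ}
    (hx : 0 ≤ x) :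
    |∑' d : ℕ, (φ d : ℝ) * (⌊x / d ^ b⌋₊ : ℝ) ^ k - (∑' d : ℕ, (φ d : ℝ) / d ^ (b * k)) * x ^ k|
      ≤ k * (∑' d : ℕ, (φ d : ℝ) / d ^ (b * (k - 1))) * x ^ (k - 1) := by
  set a : ℕ → ℝ := fun d => (φ d : ℝ) * (⌊x / d ^ b⌋₊ : ℝ) ^ k
  set t : ℕ → ℝ := fun d => (φ d : ℝ) * (x / d ^ b) ^ k
  have ht : ∀ d, t d = (φ d : ℝ) / d ^ (b * k) * x ^ k := fun d => by
    simp only [t]; rw [div_pow, ← pow_mul]; ring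
  have hbound : ∀ d, ‖a d - t d‖ ≤ k * x ^ (k - 1) * ((φ d : ℝ) / d ^ (b * (k - 1))) := by
    intro d
    calc ‖a d - t d‖ = φ d * |(⌊x / d ^ b⌋₊ : ℝ) ^ k - (x / d ^ b) ^ k| := by
          simp only [a, t, ← mul_sub, Real.norm_eq_abs, abs_mul, Nat.abs_cast]
      _ ≤ φ d * (k * (x / d ^ b) ^ (k - 1)) := by
          gcongr; exact abs_floor_pow_sub_pow_le (by positivity) k
      _ = k * x ^ (k - 1) * ((φ d : ℝ) / d ^ (b * (k - 1))) := by
          rw [div_pow, ← pow_mul]; ring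
  have hmajorant := (summable_totient_div_pow hbk).mul_left (k * x ^ (k - 1))
  have ht_summable : Summable t := by
    refine ((summable_totient_div_pow ?_).mul_right (x ^ k)).congr fun d => (ht d).symm
    exact hbk.trans_le (Nat.mul_le_mul_left b (Nat.sub_le k 1))
  have ha_summable : Summable a := by
    simpa using (hmajorant.of_norm_bounded hbound).add ht_summable
  rw [← tsum_mul_right, ← tsum_congr ht, ← Real.norm_eq_abs, ← ha_summable.tsum_sub ht_summable]
  refine (tsum_of_norm_bounded hmajorant.hasSum hbound).trans_eq ?_
  rw [tsum_mul_left]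
  ring

lemma LSeriesSummable_totient {s : ℂ} (hs : 2 < s.re) :
    LSeriesSummable (fun n ↦ (φ n : ℂ)) s :=
  LSeriesSummable_of_le_const_mul_rpow hs
    ⟨1, fun n _ => by norm_num; exact_mod_cast Nat.totient_le n⟩

lemma totient_convolution_one : (fun n ↦ (φ n : ℂ)) ⍟ 1 = fun n : ℕ ↦ (n : ℂ) := by
  ext n
  simp only [convolution_def, Pi.one_apply, mul_one]
  rw [Nat.sum_divisorsAntidiagonal (fun d _ => (φ d : ℂ)), ← Nat.cast_sum, Nat.sum_totient]

lemma LSeries_natCast_eq_riemannZeta_sub_one {s : ℂ} (hs : 2 < s.re) :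
    L (fun n : ℕ ↦ (n : ℂ)) s = riemannZeta (s - 1) := by
  rw [zeta_eq_tsum_one_div_nat_cpow (by simp; linarith), LSeries]
  congr 1
  ext n
  rcases eq_or_ne n 0 with rfl | hn
  · rw [term_zero, Nat.cast_zero, Complex.zero_cpow, div_zero]
    exact sub_ne_zero.2 fun h => by simp [h] at hs
  · rw [term_of_ne_zero hn, Complex.cpow_sub _ _ (Nat.cast_ne_zero.2 hn), Complex.cpow_one,
      one_div_div]

lemma LSeries_totient_eq_riemannZeta_sub_one_div {s : ℂ} (hs : 2 < s.re) :
    L (fun n ↦ (φ n : ℂ)) s = riemannZeta (s - 1) / riemannZeta s := by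
  have hs₁ : 1 < s.re := by linarith
  rw [eq_div_iff (riemannZeta_ne_zero_of_one_lt_re hs₁), ← LSeries_one_eq_riemannZeta hs₁,
    ← LSeries_convolution' (LSeriesSummable_totient hs) (LSeriesSummable_one_iff.2 hs₁),
    totient_convolution_one, LSeries_natCast_eq_riemannZeta_sub_one hs]

lemma riemannZeta_natCast_sub_one_div_eq_tsum_totient {m : ℕ} (hm : 2 < m) :
    riemannZeta (m - 1) / riemannZeta m = ((∑' d : ℕ, (φ d : ℝ) / d ^ m : ℝ) : ℂ) := by
  rw [← LSeries_totient_eq_riemannZeta_sub_one_div (by simpa using hm), LSeries,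
    Complex.ofReal_tsum]
  congr 1
  ext d
  rw [term_of_ne_zero' (Nat.cast_ne_zero.2 (by omega)), Complex.cpow_natCast]
  push_cast
  rfl

theorem sum_ggcdk_asymptotic (b k : ℕ) (hb : 3 ≤ b) (hk : 2 ≤ k) :
    (fun x : ℝ =>
        (∑ n ∈ Fintype.piFinset (fun _ : Fin k => Finset.Icc 1 ⌊x⌋₊),
          (ggcdk b k n : ℂ)) -
        riemannZeta ((b : ℂ) * k - 1) / riemannZeta ((b : ℂ) * k) * (x : ℂ) ^ k)
      =O[Filter.atTop] (fun x : ℝ => x ^ (k - 1)) := by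
  have hbk : 2 < b * (k - 1) := Nat.mul_le_mul hb (show 1 ≤ k - 1 by omega)
  have hzeta : riemannZeta ((b : ℂ) * k - 1) / riemannZeta ((b : ℂ) * k)
      = ((∑' d : ℕ, (φ d : ℝ) / d ^ (b * k) : ℝ) : ℂ) := by
    exact_mod_cast riemannZeta_natCast_sub_one_div_eq_tsum_totient
      (hbk.trans_le (Nat.mul_le_mul_left b (Nat.sub_le k 1)))
  refine Asymptotics.IsBigO.of_bound (k * ∑' d : ℕ, (φ d : ℝ) / d ^ (b * (k - 1))) ?_
  filter_upwards [Filter.eventually_ge_atTop 0] with x hx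
  have hcast : ∑ n ∈ Fintype.piFinset (fun _ : Fin k => Icc 1 ⌊x⌋₊), (ggcdk b k n : ℂ)
      = ((∑ n ∈ Fintype.piFinset (fun _ : Fin k => Icc 1 ⌊x⌋₊), (ggcdk b k n : ℝ) : ℝ) : ℂ) := by
    push_cast
    rfl
  rw [hzeta, hcast, sum_ggcdk_eq_tsum (by omega) (by omega), ← Complex.ofReal_pow,
    ← Complex.ofReal_mul, ← Complex.ofReal_sub, Complex.norm_real, Real.norm_eq_abs,
    Real.norm_of_nonneg (pow_nonneg hx _)]
  exact abs_tsum_totient_mul_floor_pow_sub_le hbk hx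
end
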